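/- arXiv:1312.1094 — 2 statements merged into one kernel-verified Lean document; each statement's English description precedes it below -/
import Mathlib

section
/- Let b ≥ 2 be an integer, φ : ℕ → ℕ a bijection, and I = [m·b^{−p}, (m+1)·b^{−p}) a base-b interval of generation p ≥ 1 (so 0 ≤ m < b^p). Set N = 1 + max{φ(k) : 0 ≤ k < p}. Then the image T^b_φ(I) coincides, up to a Lebesgue-null set, with a union of b^{N−p} pairwise disjoint base-b intervals of generation N; in particular λ(T^b_φ(I)) = b^{−p} = λ(I). -/
open MeasureTheory

/-- The real number in `[0,1]` represented by a base-`b` digit sequence `a`,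
namely `∑_{k ≥ 0} a(k) · b^{-(k+1)}`. -/
noncomputable def baseVal (b : ℕ) (a : ℕ → ℕ) : ℝ :=
  ∑' k : ℕ, (a k : ℝ) / (b : ℝ) ^ (k + 1)

/-- The `k`-th digit of the canonical base-`b` expansion of `x ∈ [0,1)`, i.e. of the unique
representing base-`b` digit sequence that is not eventually `b - 1`; it is given by the
standard formula `⌊x · b^(k+1)⌋ mod b`. -/
noncomputable def canonDigit (b : ℕ) (x : ℝ) (k : ℕ) : ℕ :=
  (⌊x * (b : ℝ) ^ (k + 1)⌋ % (b : ℤ)).toNat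

/-- The digit-permutation map `T^b_φ : [0,1) → [0,1)` associated to a bijection `φ : ℕ → ℕ`:
it sends `x` with canonical base-`b` expansion `a` to the real number represented by the
digit sequence `k ↦ a(φ⁻¹(k))`. -/
noncomputable def digitPerm (b : ℕ) (φ : ℕ ≃ ℕ) (x : ℝ) : ℝ :=
  baseVal b (fun k => canonDigit b x (φ.symm k))

/-!
For `x ∈ [0,1)` the canonical digits are never eventually `b - 1`, and conversely every digit
sequence that is not eventually `b - 1` is the canonical expansion of its value. Hence `T^b_φ`
is a bijection of `[0,1)` that acts on canonical expansions by `a ↦ a ∘ φ⁻¹`, with inverse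
`T^b_{φ⁻¹}`. The interval `I` consists of the points whose first `p` digits are those of `m / bᵖ`,
so `T^b_φ(I)` consists of the points whose digits at the positions `φ 0, …, φ (p - 1)`, all
below `N`, are prescribed. This condition only involves the first `N` digits, so the image is
exactly the union of the generation-`N` intervals whose `N` digits satisfy it, and `N - p` of
those digits are free.
-/

open Filter Finset

namespace Real

variable {b : ℕ}

theorem ofDigits_lt_one (hb : 1 < b) {d : ℕ → Fin b} (h : ∃ i, (d i : ℕ) ≠ b - 1) :
    ofDigits d < 1 := by
  obtain ⟨i, hi⟩ := h
  rw [← ofDigits_const_last_eq_one' hb]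
  refine Summable.tsum_lt_tsum (i := i) (fun n => ?_) ?_ summable_ofDigitsTerm
    summable_ofDigitsTerm
  · unfold ofDigitsTerm
    gcongr
    exact Nat.le_sub_one_of_lt (d n).isLt
  · unfold ofDigitsTerm
    gcongr
    exact lt_of_le_of_ne (Nat.le_sub_one_of_lt (d i).isLt) hi

theorem natCast_mul_ofDigits (d : ℕ → Fin b) :
    b * ofDigits d = d 0 + ofDigits (fun i => d (i + 1)) := by
  have : (b : ℝ) ≠ 0 := by exact_mod_cast (d 0).pos.ne'
  rw [ofDigits_eq_sum_add_ofDigits d 1]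
  simp only [ofDigitsTerm, range_one, sum_singleton, zero_add, pow_one]
  field_simp

theorem digits_succ [NeZero b] (x : ℝ) (n : ℕ) : digits x b (n + 1) = digits (b * x) b n := by
  simp only [digits, pow_succ]
  ring_nf

theorem digits_natCast_add [NeZero b] {y : ℝ} (hy : 0 ≤ y) (m n : ℕ) :
    digits (m + y) b n = digits y b n := by
  have hsplit : (m + y) * (b : ℝ) ^ (n + 1) = y * b ^ (n + 1) + ((m * b ^ n * b : ℕ) : ℝ) := by
    push_cast; ring
  ext
  have hy' : 0 ≤ y * (b : ℝ) ^ (n + 1) := by positivity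
  simp only [digits, Fin.val_ofNat, hsplit, Nat.floor_add_natCast hy', Nat.add_mul_mod_self_right]

theorem digits_ofDigits [NeZero b] (hb : 1 < b) {d : ℕ → Fin b}
    (hd : ∃ᶠ k in atTop, (d k : ℕ) ≠ b - 1) : digits (ofDigits d) b = d := by
  have shift : ∀ {d : ℕ → Fin b}, (∃ᶠ k in atTop, (d k : ℕ) ≠ b - 1) →
      ∃ᶠ k in atTop, (d (k + 1) : ℕ) ≠ b - 1 := fun hd => by
    rwa [← map_add_atTop_eq_nat 1, frequently_map] at hd
  have tail_mem : ∀ {d : ℕ → Fin b}, (∃ᶠ k in atTop, (d k : ℕ) ≠ b - 1) →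
      ofDigits (fun i => d (i + 1)) ∈ Set.Ico 0 1 := fun hd =>
    ⟨ofDigits_nonneg _, ofDigits_lt_one hb (shift hd).exists⟩
  funext n
  induction n generalizing d with
  | zero =>
    ext
    rw [digits, zero_add, pow_one, mul_comm, natCast_mul_ofDigits, add_comm,
      Nat.floor_add_natCast (tail_mem hd).1, Nat.floor_eq_zero.2 (tail_mem hd).2, zero_add,
      Fin.val_ofNat, Nat.mod_eq_of_lt (d 0).isLt]
  | succ n ih =>
    rw [digits_succ, natCast_mul_ofDigits, digits_natCast_add (tail_mem hd).1, ih (shift hd)]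

theorem frequently_digits_ne [NeZero b] (hb : 1 < b) {x : ℝ} (hx : x ∈ Set.Ico 0 1) :
    ∃ᶠ k in atTop, (digits x b k : ℕ) ≠ b - 1 := by
  intro hev
  obtain ⟨M, hM⟩ := eventually_atTop.1 hev
  have htail : (fun i => digits x b (i + M)) = fun _ => ⟨b - 1, Nat.sub_one_lt_of_lt hb⟩ :=
    funext fun i => Fin.ext (not_not.1 (hM _ (by omega)))
  have hsplit := ofDigits_eq_sum_add_ofDigits (digits x b) M
  rw [ofDigits_digits hb hx, htail, ofDigits_const_last_eq_one' hb, mul_one] at hsplit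
  -- a tail of digits `b - 1` would make `b ^ M * x` an integer, namely `⌊b ^ M * x⌋₊ + 1`
  have hint : (b : ℝ) ^ M * x = ⌊(b : ℝ) ^ M * x⌋₊ + 1 := by
    conv_lhs => rw [hsplit]
    rw [mul_add, ofDigits_digits_sum_eq hx, mul_inv_cancel₀ (by positivity)]
  linarith [Nat.lt_floor_add_one ((b : ℝ) ^ M * x)]

theorem floor_pow_mul_eq_iff [NeZero b] {x y : ℝ} (hx : x ∈ Set.Ico 0 1)
    (hy : y ∈ Set.Ico 0 1) (q : ℕ) :
    ⌊(b : ℝ) ^ q * x⌋₊ = ⌊(b : ℝ) ^ q * y⌋₊ ↔ ∀ j < q, digits x b j = digits y b j := by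
  constructor
  · intro h j hj
    have hfloor : ∀ z : ℝ, ⌊z * (b : ℝ) ^ (j + 1)⌋₊ = ⌊(b : ℝ) ^ q * z⌋₊ / b ^ (q - (j + 1)) := by
      intro z
      obtain ⟨k, rfl⟩ : ∃ k, q = k + (j + 1) := ⟨q - (j + 1), by omega⟩
      have : (b : ℝ) ≠ 0 := by exact_mod_cast NeZero.ne b
      rw [← Nat.floor_div_natCast, Nat.add_sub_cancel, Nat.cast_pow]
      congr 1
      field_simp
      ring
    simp only [digits, hfloor, h]
  · intro h
    apply Nat.cast_injective (R := ℝ)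
    rw [← ofDigits_digits_sum_eq hx, ← ofDigits_digits_sum_eq hy]
    congr 1
    refine Finset.sum_congr rfl fun i hi => ?_
    rw [ofDigitsTerm, ofDigitsTerm, h i (Finset.mem_range.1 hi)]

end Real

open Real

section DigitPerm

variable {b : ℕ}

theorem canonDigit_eq_digits [NeZero b] {x : ℝ} (hx : 0 ≤ x) (k : ℕ) :
    canonDigit b x k = digits x b k := by
  rw [canonDigit, digits, Fin.val_ofNat, ← Int.natCast_floor_eq_floor (by positivity),
    ← Int.natCast_mod, Int.toNat_natCast]

theorem baseVal_eq_ofDigits (d : ℕ → Fin b) : baseVal b (fun k => d k) = ofDigits d := by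
  simp only [baseVal, ofDigits, ofDigitsTerm, div_eq_mul_inv]

theorem digitPerm_eq_ofDigits [NeZero b] (φ : ℕ ≃ ℕ) {x : ℝ} (hx : 0 ≤ x) :
    digitPerm b φ x = ofDigits (fun k => digits x b (φ.symm k)) := by
  simp only [digitPerm, canonDigit_eq_digits hx, baseVal_eq_ofDigits]

variable [NeZero b]

theorem frequently_digits_symm_ne (hb : 1 < b) (φ : ℕ ≃ ℕ) {x : ℝ} (hx : x ∈ Set.Ico 0 1) :
    ∃ᶠ k in atTop, (digits x b (φ.symm k) : ℕ) ≠ b - 1 := by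
  have hφ : Tendsto φ atTop atTop := by
    simpa only [Nat.cofinite_eq_atTop] using φ.injective.tendsto_cofinite
  exact hφ.frequently (by simpa using frequently_digits_ne hb hx)

theorem digitPerm_mem_Ico (hb : 1 < b) (φ : ℕ ≃ ℕ) {x : ℝ} (hx : x ∈ Set.Ico 0 1) :
    digitPerm b φ x ∈ Set.Ico 0 1 := by
  rw [digitPerm_eq_ofDigits φ hx.1]
  exact ⟨ofDigits_nonneg _, ofDigits_lt_one hb (frequently_digits_symm_ne hb φ hx).exists⟩

theorem digits_digitPerm (hb : 1 < b) (φ : ℕ ≃ ℕ) {x : ℝ} (hx : x ∈ Set.Ico 0 1) :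
    digits (digitPerm b φ x) b = fun k => digits x b (φ.symm k) := by
  rw [digitPerm_eq_ofDigits φ hx.1, digits_ofDigits hb (frequently_digits_symm_ne hb φ hx)]

theorem digitPerm_digitPerm_symm (hb : 1 < b) (φ : ℕ ≃ ℕ) {y : ℝ} (hy : y ∈ Set.Ico 0 1) :
    digitPerm b φ (digitPerm b φ.symm y) = y := by
  rw [digitPerm_eq_ofDigits φ (digitPerm_mem_Ico hb φ.symm hy).1, digits_digitPerm hb φ.symm hy]
  simpa using ofDigits_digits hb hy

theorem image_digitPerm_setOf_digits (hb : 1 < b) (φ : ℕ ≃ ℕ) (P : (ℕ → Fin b) → Prop) :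
    digitPerm b φ '' {x | x ∈ Set.Ico 0 1 ∧ P (digits x b)} =
      {y | y ∈ Set.Ico 0 1 ∧ P (fun k => digits y b (φ k))} := by
  ext y
  constructor
  · rintro ⟨x, ⟨hx, hPx⟩, rfl⟩
    refine ⟨digitPerm_mem_Ico hb φ hx, ?_⟩
    simpa [digits_digitPerm hb φ hx] using hPx
  · rintro ⟨hy, hPy⟩
    refine ⟨digitPerm b φ.symm y, ⟨digitPerm_mem_Ico hb φ.symm hy, ?_⟩,
      digitPerm_digitPerm_symm hb φ hy⟩
    simpa [digits_digitPerm hb φ.symm hy] using hPy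

end DigitPerm

section BaseInterval

variable {b : ℕ}

def baseInterval (b q m : ℕ) : Set ℝ :=
  Set.Ico ((m : ℝ) / (b : ℝ) ^ q) (((m : ℝ) + 1) / (b : ℝ) ^ q)

theorem mem_baseInterval_iff (hb : 0 < b) {q m : ℕ} {x : ℝ} :
    x ∈ baseInterval b q m ↔ 0 ≤ x ∧ ⌊(b : ℝ) ^ q * x⌋₊ = m := by
  have hpos : (0 : ℝ) < (b : ℝ) ^ q := by positivity
  rw [baseInterval, Set.mem_Ico, div_le_iff₀' hpos, lt_div_iff₀' hpos]
  constructor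
  · rintro ⟨h₁, h₂⟩
    have hx : 0 ≤ x := nonneg_of_mul_nonneg_right (le_trans (by positivity) h₁) hpos
    exact ⟨hx, (Nat.floor_eq_iff (by positivity)).2 ⟨h₁, h₂⟩⟩
  · rintro ⟨hx, rfl⟩
    exact ⟨Nat.floor_le (by positivity), Nat.lt_floor_add_one _⟩

theorem floor_pow_mul_div_pow (hb : 0 < b) (q m : ℕ) :
    ⌊(b : ℝ) ^ q * ((m : ℝ) / (b : ℝ) ^ q)⌋₊ = m := by
  rw [mul_div_cancel₀ _ (by positivity), Nat.floor_natCast]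

theorem div_pow_mem_Ico {q m : ℕ} (hm : m < b ^ q) : (m : ℝ) / (b : ℝ) ^ q ∈ Set.Ico 0 1 := by
  have hpos : (0 : ℝ) < (b : ℝ) ^ q := by exact_mod_cast Nat.pos_of_ne_zero (by omega)
  exact ⟨by positivity, (div_lt_one hpos).2 (by exact_mod_cast hm)⟩

theorem baseInterval_eq_setOf_digits [NeZero b] {q m : ℕ} (hm : m < b ^ q) :
    baseInterval b q m =
      {x | x ∈ Set.Ico 0 1 ∧ ∀ j < q, digits x b j = digits ((m : ℝ) / b ^ q) b j} := by
  have hb : 0 < b := Nat.pos_of_ne_zero (NeZero.ne b)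
  have hm_floor := floor_pow_mul_div_pow hb q m
  ext x
  rw [mem_baseInterval_iff hb, Set.mem_ofPred_eq]
  constructor
  · rintro ⟨hx, hfloor⟩
    have hx1 : x < 1 := by
      have := (Nat.floor_lt (mul_nonneg (by positivity) hx)).1 (hfloor.trans_lt hm)
      push_cast at this
      exact (mul_lt_iff_lt_one_right (by positivity)).1 this
    exact ⟨⟨hx, hx1⟩,
      (floor_pow_mul_eq_iff ⟨hx, hx1⟩ (div_pow_mem_Ico hm) q).1 (hfloor.trans hm_floor.symm)⟩
  · rintro ⟨hx, hdigits⟩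
    exact ⟨hx.1, ((floor_pow_mul_eq_iff hx (div_pow_mem_Ico hm) q).2 hdigits).trans hm_floor⟩

theorem pairwise_disjoint_baseInterval (hb : 0 < b) (q : ℕ) :
    Pairwise (Function.onFun Disjoint (baseInterval b q)) := fun _ _ hne =>
  Set.disjoint_left.2 fun _ hm hm' =>
    hne (((mem_baseInterval_iff hb).1 hm).2.symm.trans ((mem_baseInterval_iff hb).1 hm').2)

theorem volume_baseInterval (q m : ℕ) :
    volume (baseInterval b q m) = ENNReal.ofReal (1 / (b : ℝ) ^ q) := by
  rw [baseInterval, Real.volume_Ico]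
  congr 1
  ring

theorem volume_biUnion_baseInterval (hb : 0 < b) (q : ℕ) (S : Finset ℕ) :
    volume (⋃ m ∈ S, baseInterval b q m) = #S * ENNReal.ofReal (1 / (b : ℝ) ^ q) := by
  rw [measure_biUnion_finset (f := baseInterval b q)
    ((pairwise_disjoint_baseInterval hb q).set_pairwise _) fun _ _ => measurableSet_Ico]
  simp only [volume_baseInterval, sum_const, nsmul_eq_mul]

theorem setOf_digits_eq_biUnion [NeZero b] (N : ℕ) (P : (ℕ → Fin b) → Prop) [DecidablePred P]
    (hP : ∀ d d' : ℕ → Fin b, (∀ j < N, d j = d' j) → (P d ↔ P d')) :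
    {y | y ∈ Set.Ico 0 1 ∧ P (digits y b)} =
      ⋃ m ∈ (range (b ^ N)).filter (fun m : ℕ => P (digits ((m : ℝ) / b ^ N) b)),
        baseInterval b N m := by
  have hb : 0 < b := Nat.pos_of_ne_zero (NeZero.ne b)
  ext y
  simp only [Set.mem_ofPred_eq, Set.mem_iUnion, mem_filter, mem_range, exists_prop]
  constructor
  · rintro ⟨hy, hPy⟩
    have hlt : ⌊(b : ℝ) ^ N * y⌋₊ < b ^ N := by
      rw [Nat.floor_lt (mul_nonneg (by positivity) hy.1)]
      push_cast
      exact (mul_lt_iff_lt_one_right (by positivity)).2 hy.2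
    have hmem : y ∈ baseInterval b N ⌊(b : ℝ) ^ N * y⌋₊ := (mem_baseInterval_iff hb).2 ⟨hy.1, rfl⟩
    rw [baseInterval_eq_setOf_digits hlt] at hmem
    exact ⟨_, ⟨hlt, (hP _ _ hmem.2).1 hPy⟩, (mem_baseInterval_iff hb).2 ⟨hy.1, rfl⟩⟩
  · rintro ⟨m, ⟨hm, hPm⟩, hym⟩
    rw [baseInterval_eq_setOf_digits hm] at hym
    exact ⟨hym.1, (hP _ _ hym.2).2 hPm⟩

end BaseInterval

section Counting

variable {b : ℕ}

theorem card_filter_range_pow_digits [NeZero b] (N : ℕ) (Q : (Fin N → Fin b) → Prop)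
    [DecidablePred Q] :
    #((range (b ^ N)).filter fun m : ℕ => Q fun j => digits ((m : ℝ) / b ^ N) b j) =
      #(univ.filter Q) := by
  have hb : 0 < b := Nat.pos_of_ne_zero (NeZero.ne b)
  set D : ℕ → Fin N → Fin b := fun m j => digits ((m : ℝ) / b ^ N) b j
  have hinj : Set.InjOn D (range (b ^ N)) := by
    intro m hm m' hm' h
    rw [← floor_pow_mul_div_pow hb N m, ← floor_pow_mul_div_pow hb N m']
    exact (floor_pow_mul_eq_iff (div_pow_mem_Ico (mem_range.1 hm))
      (div_pow_mem_Ico (mem_range.1 hm')) N).2 fun j hj => congrFun h ⟨j, hj⟩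
  have hsurj : (range (b ^ N)).image D = univ := by
    refine eq_univ_of_card _ ?_
    rw [card_image_of_injOn hinj, card_range, Fintype.card_fun, Fintype.card_fin, Fintype.card_fin]
  rw [← card_image_of_injOn (hinj.mono (coe_subset.2 (filter_subset _ _))), ← filter_image, hsurj]

theorem card_filter_forall_mem_eq {N : ℕ} (P : Finset ℕ) (hP : P ⊆ range N) (c : ℕ → Fin b) :
    #(univ.filter fun f : Fin N → Fin b => ∀ i : Fin N, (i : ℕ) ∈ P → f i = c i) =
      b ^ (N - #P) := by
  have hpi : univ.filter (fun f : Fin N → Fin b => ∀ i : Fin N, (i : ℕ) ∈ P → f i = c i) =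
      Fintype.piFinset fun i : Fin N => if (i : ℕ) ∈ P then {c i} else univ := by
    ext f
    simp only [mem_filter, mem_univ, true_and, Fintype.mem_piFinset]
    refine forall_congr' fun i => ?_
    split_ifs <;> simp [*]
  calc _ = ∏ i : Fin N, #(if (i : ℕ) ∈ P then {c i} else (univ : Finset (Fin b))) := by
        rw [hpi, Fintype.card_piFinset]
    _ = ∏ i ∈ range N, if i ∈ P then 1 else b := by
        rw [← Fin.prod_univ_eq_prod_range]
        refine Fintype.prod_congr _ _ fun i => ?_
        split_ifs <;> simp
    _ = b ^ (N - #P) := by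
        rw [prod_ite, prod_const_one, one_mul, prod_const, ← sdiff_eq_filter,
          card_sdiff_of_subset hP, card_range]

theorem card_filter_digits_comp_eq [NeZero b] {p N : ℕ} (φ : ℕ ≃ ℕ) (hφ : ∀ k < p, φ k < N)
    (c : ℕ → Fin b) :
    #((range (b ^ N)).filter fun m : ℕ => ∀ k < p, digits ((m : ℝ) / b ^ N) b (φ k) = c k) =
      b ^ (N - p) := by
  set P := (range p).map φ.toEmbedding
  have hP : P ⊆ range N := fun i hi => by
    obtain ⟨k, hk, rfl⟩ := mem_map.1 hi
    exact mem_range.2 (hφ k (mem_range.1 hk))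
  have hpattern : ∀ d : ℕ → Fin b,
      (∀ k < p, d (φ k) = c k) ↔ ∀ i : Fin N, (i : ℕ) ∈ P → d i = c (φ.symm i) := by
    refine fun d => ⟨fun h i hi => ?_, fun h k hk => ?_⟩
    · obtain ⟨k, hk, hki⟩ := mem_map.1 hi
      simp [← hki, h k (mem_range.1 hk)]
    · simpa using h ⟨φ k, hφ k hk⟩ (mem_map_of_mem _ (mem_range.2 hk))
  rw [filter_congr fun m _ => hpattern _]
  exact (card_filter_range_pow_digits N _).trans <| by
    rw [card_filter_forall_mem_eq P hP fun i => c (φ.symm i), card_map, card_range]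

end Counting

theorem digitPerm_image_base_interval_general (b : ℕ) (hb : 2 ≤ b) (φ : ℕ ≃ ℕ)
    (p m : ℕ) (hm : m < b ^ p)
    (N : ℕ) (hN : N = 1 + (Finset.range p).sup (fun k => φ k))
    (I : Set ℝ) (hI : I = Set.Ico ((m : ℝ) / (b : ℝ) ^ p) (((m : ℝ) + 1) / (b : ℝ) ^ p)) :
    ∃ S : Finset ℕ,
      S.card = b ^ (N - p) ∧
      (∀ m' ∈ S, m' < b ^ N) ∧
      ((S : Set ℕ).Pairwise fun m₁ m₂ =>
        Disjoint (Set.Ico ((m₁ : ℝ) / (b : ℝ) ^ N) (((m₁ : ℝ) + 1) / (b : ℝ) ^ N))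
          (Set.Ico ((m₂ : ℝ) / (b : ℝ) ^ N) (((m₂ : ℝ) + 1) / (b : ℝ) ^ N))) ∧
      volume
        (((digitPerm b φ '' I) \
            (⋃ m' ∈ S, Set.Ico ((m' : ℝ) / (b : ℝ) ^ N) (((m' : ℝ) + 1) / (b : ℝ) ^ N))) ∪
          ((⋃ m' ∈ S, Set.Ico ((m' : ℝ) / (b : ℝ) ^ N) (((m' : ℝ) + 1) / (b : ℝ) ^ N)) \
            (digitPerm b φ '' I))) = 0 ∧
      volume (digitPerm b φ '' I) = ENNReal.ofReal (1 / (b : ℝ) ^ p) ∧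
      volume I = ENNReal.ofReal (1 / (b : ℝ) ^ p) := by
  have : NeZero b := ⟨by omega⟩
  have hφ : ∀ k < p, φ k < N := fun k hk => hN ▸ Nat.lt_one_add_iff.2
    (le_sup (f := fun k => φ k) (mem_range.2 hk))
  have hpN : p ≤ N := by
    simpa using card_le_card_of_injOn φ (fun k hk => mem_range.2 (hφ k (mem_range.1 hk)))
      φ.injective.injOn
  set c := digits ((m : ℝ) / b ^ p) b
  set S := (range (b ^ N)).filter fun m' : ℕ => ∀ k < p, digits ((m' : ℝ) / b ^ N) b (φ k) = c k
  have hcard : #S = b ^ (N - p) := card_filter_digits_comp_eq φ hφ c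
  have himage : digitPerm b φ '' I = ⋃ m' ∈ S, baseInterval b N m' := by
    rw [show I = baseInterval b p m from hI, baseInterval_eq_setOf_digits hm,
      image_digitPerm_setOf_digits hb φ fun d => ∀ j < p, d j = c j]
    exact setOf_digits_eq_biUnion N (fun d => ∀ k < p, d (φ k) = c k)
      fun d d' h => forall₂_congr fun k hk => by rw [h _ (hφ k hk)]
  have hvol : volume (digitPerm b φ '' I) = ENNReal.ofReal (1 / (b : ℝ) ^ p) := by
    rw [himage, volume_biUnion_baseInterval (by omega), hcard, ← ENNReal.ofReal_natCast,
      ← ENNReal.ofReal_mul (by positivity), Nat.cast_pow, pow_sub₀ _ (by positivity) hpN]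
    congr 1
    field_simp
  refine ⟨S, hcard, fun m' hm' => mem_range.1 (mem_filter.1 hm').1,
    (pairwise_disjoint_baseInterval (by omega) N).set_pairwise _, ?_, hvol,
    hI ▸ volume_baseInterval p m⟩
  simp only [himage, baseInterval, sdiff_self, Set.bot_eq_empty, Set.union_self, measure_empty]

/-- Let `b ≥ 2` be an integer, `φ : ℕ → ℕ` a bijection, and
`I = [m·b⁻ᵖ, (m+1)·b⁻ᵖ)` a base-`b` interval of generation `p ≥ 1` (so `0 ≤ m < bᵖ`).
Set `N = 1 + max {φ(k) : 0 ≤ k < p}`. Then the image `T^b_φ(I)` coincides, up to a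
Lebesgue-null set, with a union of `b^(N−p)` pairwise disjoint base-`b` intervals of
generation `N`; in particular `λ(T^b_φ(I)) = b⁻ᵖ = λ(I)`. -/
theorem digitPerm_image_base_interval (b : ℕ) (hb : 2 ≤ b) (φ : ℕ ≃ ℕ)
    (p m : ℕ) (hp : 1 ≤ p) (hm : m < b ^ p)
    (N : ℕ) (hN : N = 1 + (Finset.range p).sup (fun k => φ k))
    (I : Set ℝ) (hI : I = Set.Ico ((m : ℝ) / (b : ℝ) ^ p) (((m : ℝ) + 1) / (b : ℝ) ^ p)) :
    ∃ S : Finset ℕ,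
      S.card = b ^ (N - p) ∧
      (∀ m' ∈ S, m' < b ^ N) ∧
      ((S : Set ℕ).Pairwise fun m₁ m₂ =>
        Disjoint (Set.Ico ((m₁ : ℝ) / (b : ℝ) ^ N) (((m₁ : ℝ) + 1) / (b : ℝ) ^ N))
          (Set.Ico ((m₂ : ℝ) / (b : ℝ) ^ N) (((m₂ : ℝ) + 1) / (b : ℝ) ^ N))) ∧
      volume
        (((digitPerm b φ '' I) \
            (⋃ m' ∈ S, Set.Ico ((m' : ℝ) / (b : ℝ) ^ N) (((m' : ℝ) + 1) / (b : ℝ) ^ N))) ∪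
          ((⋃ m' ∈ S, Set.Ico ((m' : ℝ) / (b : ℝ) ^ N) (((m' : ℝ) + 1) / (b : ℝ) ^ N)) \
            (digitPerm b φ '' I))) = 0 ∧
      volume (digitPerm b φ '' I) = ENNReal.ofReal (1 / (b : ℝ) ^ p) ∧
      volume I = ENNReal.ofReal (1 / (b : ℝ) ^ p) :=
  digitPerm_image_base_interval_general b hb φ p m hm N hN I hI
end

section
/- Let b ≥ 2 and k ≥ 1 be integers and ψ : ℕ × {0,…,k−1} → ℕ a bijection. Define E_ψ : [0,1) → [0,1)^k by E_ψ(x) = (x_0,…,x_{k−1}), where a is the canonical base-b expansion of x and x_j = ∑_{m≥0} a(ψ(m,j))·b^{−(m+1)} for each 0 ≤ j ≤ k−1. Then E_ψ is measurable and the pushforward of λ restricted to [0,1) under E_ψ equals the product of k copies of λ restricted to [0,1). -/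
/-!
The canonical digits of a uniformly distributed point of `[0,1)` are i.i.d. uniform on
`{0,…,b−1}`: the first `n` digits of `x` are the base-`b` digits of `⌊x bⁿ⌋`, and each value
`c < bⁿ` of `⌊x bⁿ⌋` is taken on an interval of length `b⁻ⁿ`. Since the canonical digits of `x`
sum back to `x`, the value map carries this i.i.d. law back to Lebesgue measure on `[0,1)`.
Distributing an i.i.d. sequence along the bijection `ψ` gives `k` independent i.i.d. sequences,
and `E_ψ` is that redistribution followed by the value map in every coordinate.
-/

open MeasureTheory

/-- The split map `E_ψ : [0,1) → [0,1)^k` associated to a bijection `ψ : ℕ × {0,…,k−1} ≃ ℕ`: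
`E_ψ(x) = (x_0,…,x_{k−1})` where `a` is the canonical base-`b` expansion of `x` and
`x_j = ∑_{m ≥ 0} a(ψ(m,j)) · b^{−(m+1)}`. -/
noncomputable def splitMap (b k : ℕ) (ψ : ℕ × Fin k ≃ ℕ) (x : ℝ) : Fin k → ℝ :=
  fun j => baseVal b (fun m => canonDigit b x (ψ (m, j)))

open Set ProbabilityTheory
open scoped ENNReal

lemma volume_Ico_inter_natFloor_mul_eq {N c : ℕ} (hc : c < N) :
    volume (Ico (0 : ℝ) 1 ∩ {x | ⌊x * N⌋₊ = c}) = (N : ℝ≥0∞)⁻¹ := by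
  have hN : (0 : ℝ) < N := by exact_mod_cast (Nat.zero_le c).trans_lt hc
  have hset : Ico (0 : ℝ) 1 ∩ {x | ⌊x * N⌋₊ = c} = Ico ((c : ℝ) / N) ((c + 1) / N) := by
    ext x
    simp only [mem_inter_iff, mem_Ico, mem_ofPred_eq, div_le_iff₀ hN, lt_div_iff₀ hN]
    constructor
    · rintro ⟨⟨hx0, -⟩, hx⟩
      exact (Nat.floor_eq_iff (by positivity)).1 hx
    · rintro ⟨hcx, hxc⟩
      have hxN : 0 ≤ x * N := (Nat.cast_nonneg c).trans hcx
      have hc1 : (c : ℝ) + 1 ≤ N := by exact_mod_cast hc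
      exact ⟨⟨nonneg_of_mul_nonneg_left hxN hN, (mul_lt_iff_lt_one_left hN).1 (hxc.trans_le hc1)⟩,
        (Nat.floor_eq_iff hxN).2 ⟨hcx, hxc⟩⟩
  rw [hset, Real.volume_Ico, ← sub_div, add_sub_cancel_left, one_div,
    ENNReal.ofReal_inv_of_pos hN, ENNReal.ofReal_natCast]

theorem MeasureTheory.Measure.infinitePi_map_comp_curry {ι κ ι' X : Type*} [MeasurableSpace X]
    (ν : Measure X) [IsProbabilityMeasure ν] (e : ι × κ ≃ ι') :
    (infinitePi fun _ : ι' ↦ ν).map (fun a i j ↦ a (e (i, j))) =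
      infinitePi fun _ : ι ↦ infinitePi fun _ : κ ↦ ν := by
  have he : (fun (a : ι' → X) i j ↦ a (e (i, j))) =
      MeasurableEquiv.curry ι κ X ∘ (MeasurableEquiv.piCongrLeft (fun _ ↦ X) e).symm := by
    ext a i j
    rfl
  rw [he, ← Measure.map_map (by fun_prop) (by fun_prop),
    ← (MeasurableEquiv.map_apply_eq_iff_map_symm_apply_eq _).1
      (infinitePi_map_piCongrLeft (fun _ ↦ ν) e)]
  exact infinitePi_map_curry fun _ _ ↦ ν

variable {b : ℕ}

lemma canonDigit_eq_natFloor_div_mod {x : ℝ} (hx : 0 ≤ x) {i n : ℕ} (hi : i < n) :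
    canonDigit b x i = ⌊x * b ^ n⌋₊ / b ^ (n - 1 - i) % b := by
  rcases Nat.eq_zero_or_pos b with rfl | hb
  · simp [canonDigit, zero_pow (by omega : n ≠ 0)]
  have hpow : x * (b : ℝ) ^ (i + 1) = x * b ^ n / ((b ^ (n - 1 - i) : ℕ) : ℝ) := by
    rw [eq_div_iff (by positivity), Nat.cast_pow, mul_assoc, ← pow_add]
    congr 2
    omega
  rw [canonDigit, ← Int.natCast_floor_eq_floor (by positivity), hpow, Nat.floor_div_natCast]
  omega

lemma canonDigit_lt [NeZero b] (x : ℝ) (i : ℕ) : canonDigit b x i < b := by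
  have hb : (0 : ℤ) < b := by exact_mod_cast Nat.pos_of_neZero b
  have := Int.emod_lt_of_pos ⌊x * (b : ℝ) ^ (i + 1)⌋ hb
  unfold canonDigit
  omega

lemma natFloor_mul_pow_succ {x : ℝ} (hx : 0 ≤ x) (n : ℕ) :
    ⌊x * b ^ (n + 1)⌋₊ = b * ⌊x * b ^ n⌋₊ + canonDigit b x n := by
  rcases Nat.eq_zero_or_pos b with rfl | hb
  · simp [canonDigit]
  have hdiv : ⌊x * (b : ℝ) ^ (n + 1)⌋₊ / b = ⌊x * b ^ n⌋₊ := by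
    rw [← Nat.floor_div_natCast, pow_succ, ← mul_assoc, mul_div_cancel_right₀ _ (by positivity)]
  rw [canonDigit_eq_natFloor_div_mod hx (by omega : n < n + 1), show n + 1 - 1 - n = 0 by omega,
    pow_zero, Nat.div_one, ← hdiv, Nat.div_add_mod]

variable (b) in
noncomputable def digitSeq [NeZero b] (x : ℝ) (i : ℕ) : Fin b :=
  ⟨canonDigit b x i, canonDigit_lt x i⟩

lemma measurable_digitSeq [NeZero b] : Measurable (digitSeq b) := by
  refine measurable_pi_lambda _ fun i ↦ measurable_to_countable' fun d ↦ ?_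
  have hpre : (fun x ↦ digitSeq b x i) ⁻¹' {d} =
      (fun x : ℝ ↦ ⌊x * (b : ℝ) ^ (i + 1)⌋) ⁻¹' {z | (z % b).toNat = d} := by
    ext x
    simp [digitSeq, canonDigit, Fin.ext_iff]
  rw [hpre]
  exact Int.measurable_floor.comp (measurable_id.mul_const _) (.of_discrete)

lemma measurable_digitSeq_prefix [NeZero b] (n : ℕ) :
    Measurable fun x (i : Fin n) ↦ digitSeq b x i :=
  measurable_pi_lambda _ fun _ ↦ (measurable_pi_apply _).comp measurable_digitSeq

variable (b) in
/-- Reads `c < b ^ n` as its `n` base-`b` digits, most significant first. -/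
def leadingDigitsEquiv (n : ℕ) : Fin (b ^ n) ≃ (Fin n → Fin b) :=
  finFunctionFinEquiv.symm.trans (Equiv.piCongrLeft' _ Fin.revPerm)

lemma leadingDigitsEquiv_apply_val {n : ℕ} (c : Fin (b ^ n)) (i : Fin n) :
    (leadingDigitsEquiv b n c i : ℕ) = c / b ^ (n - 1 - i) % b := by
  rw [show n - 1 - (i : ℕ) = n - (i + 1) by omega]
  simp [leadingDigitsEquiv, finFunctionFinEquiv_symm_apply_val]

lemma natFloor_mul_pow_lt [NeZero b] {x : ℝ} (hx : x ∈ Ico (0 : ℝ) 1) (n : ℕ) :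
    ⌊x * b ^ n⌋₊ < b ^ n := by
  rw [Nat.floor_lt (mul_nonneg hx.1 (by positivity))]
  push_cast
  exact mul_lt_of_lt_one_left (by exact_mod_cast pow_pos (Nat.pos_of_neZero b) n) hx.2

lemma digitSeq_prefix_eq [NeZero b] {x : ℝ} (hx : x ∈ Ico (0 : ℝ) 1) (n : ℕ) :
    (fun i : Fin n ↦ digitSeq b x i) = leadingDigitsEquiv b n ⟨_, natFloor_mul_pow_lt hx n⟩ := by
  ext i
  rw [leadingDigitsEquiv_apply_val]
  exact canonDigit_eq_natFloor_div_mod hx.1 i.isLt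

lemma map_digitSeq_prefix [NeZero b] (n : ℕ) :
    (volume.restrict (Ico (0 : ℝ) 1)).map (fun x (i : Fin n) ↦ digitSeq b x i) =
      Measure.pi fun _ ↦ uniformOn (univ : Set (Fin b)) := by
  refine Measure.ext_iff_singleton.2 fun f ↦ ?_
  set c := (leadingDigitsEquiv b n).symm f
  have hpre : (fun x (i : Fin n) ↦ digitSeq b x i) ⁻¹' {f} ∩ Ico 0 1 =
      Ico (0 : ℝ) 1 ∩ {x | ⌊x * (b ^ n : ℕ)⌋₊ = c} := by
    ext x
    simp only [mem_inter_iff, mem_preimage, mem_singleton_iff, mem_ofPred_eq]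
    refine and_comm.trans (and_congr_right fun hx ↦ ?_)
    rw [digitSeq_prefix_eq hx, ← Equiv.eq_symm_apply, Fin.ext_iff, Nat.cast_pow]
  rw [Measure.map_apply (measurable_digitSeq_prefix n) (measurableSet_singleton f),
    Measure.restrict_apply' measurableSet_Ico,
    hpre, volume_Ico_inter_natFloor_mul_eq c.isLt, Measure.pi_singleton]
  simp [uniformOn_univ, ENNReal.inv_pow]

theorem measurePreserving_digitSeq [NeZero b] :
    MeasurePreserving (digitSeq b) (volume.restrict (Ico (0 : ℝ) 1))
      (Measure.infinitePi fun _ ↦ uniformOn (univ : Set (Fin b))) := by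
  refine ⟨measurable_digitSeq, Measure.eq_infinitePi _ fun s t _ ↦ ?_⟩
  classical
  obtain ⟨n, hsn⟩ := s.exists_nat_subset_range
  have hpre : digitSeq b ⁻¹' (s : Set ℕ).pi t =
      (fun x (i : Fin n) ↦ digitSeq b x i) ⁻¹' {i : Fin n | (i : ℕ) ∈ s}.pi (fun i ↦ t i) := by
    ext x
    simp only [mem_preimage, Set.mem_pi, Finset.mem_coe, mem_ofPred_eq]
    exact ⟨fun h i hi ↦ h i hi, fun h i hi ↦ h ⟨i, Finset.mem_range.1 (hsn hi)⟩ hi⟩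
  rw [Measure.map_apply measurable_digitSeq
    (.pi s.countable_toSet fun _ _ ↦ .of_discrete), hpre,
    ← Measure.map_apply (measurable_digitSeq_prefix n) (.of_discrete),
    map_digitSeq_prefix, ← Set.pi_univ_ite, Measure.pi_pi]
  simp only [apply_ite (uniformOn univ), measure_univ, mem_ofPred_eq]
  rw [Fin.prod_univ_eq_prod_range (fun i ↦ if i ∈ s then uniformOn univ (t i) else 1),
    Finset.prod_ite_mem, Finset.inter_eq_right.2 hsn]

lemma sum_range_canonDigit_div (hb : 0 < b) {x : ℝ} (hx : x ∈ Ico (0 : ℝ) 1) (n : ℕ) :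
    ∑ i ∈ Finset.range n, (canonDigit b x i : ℝ) / b ^ (i + 1) = ⌊x * b ^ n⌋₊ / b ^ n := by
  induction n with
  | zero => simp [Nat.floor_eq_zero.2 hx.2]
  | succ n ih =>
    rw [Finset.sum_range_succ, ih, natFloor_mul_pow_succ hx.1]
    push_cast
    field_simp
    ring

lemma baseVal_canonDigit (hb : 1 < b) {x : ℝ} (hx : x ∈ Ico (0 : ℝ) 1) :
    baseVal b (canonDigit b x) = x := by
  have hsum : HasSum (fun i ↦ (canonDigit b x i : ℝ) / b ^ (i + 1)) x := by
    rw [hasSum_iff_tendsto_nat_of_nonneg (fun _ ↦ by positivity)]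
    simp_rw [sum_range_canonDigit_div (by omega : 0 < b) hx]
    exact (tendsto_nat_floor_mul_div_atTop hx.1).comp
      (tendsto_pow_atTop_atTop_of_one_lt (by exact_mod_cast hb))
  exact hsum.tsum_eq

lemma summable_digit_div_pow (hb : 1 < b) {a : ℕ → ℕ} (ha : ∀ m, a m < b) :
    Summable fun m ↦ (a m : ℝ) / b ^ (m + 1) := by
  have hb' : (1 : ℝ) < b := by exact_mod_cast hb
  refine (summable_geometric_of_lt_one (by positivity) (inv_lt_one_of_one_lt₀ hb')).of_nonneg_of_le
    (fun _ ↦ by positivity) fun m ↦ ?_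
  rw [inv_pow, pow_succ, div_le_iff₀ (by positivity)]
  field_simp
  exact_mod_cast (ha m).le

lemma measurable_baseVal_val (hb : 1 < b) : Measurable fun a : ℕ → Fin b ↦ baseVal b (a ·) := by
  refine measurable_of_tendsto_metrizable (f := fun n a ↦
    ∑ m ∈ Finset.range n, ((a m : ℕ) : ℝ) / b ^ (m + 1)) (fun n ↦ ?_) ?_
  · exact Finset.measurable_sum _ fun m _ ↦
      ((measurable_from_top (f := fun d : Fin b ↦ ((d : ℕ) : ℝ))).comp
        (measurable_pi_apply m)).div_const _
  · exact tendsto_pi_nhds.2 fun a ↦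
      (summable_digit_div_pow hb fun m ↦ (a m).isLt).hasSum.tendsto_sum_nat

lemma measurePreserving_baseVal_val [NeZero b] (hb : 1 < b) :
    MeasurePreserving (fun a : ℕ → Fin b ↦ baseVal b (a ·))
      (Measure.infinitePi fun _ ↦ uniformOn univ) (volume.restrict (Ico (0 : ℝ) 1)) := by
  refine ⟨measurable_baseVal_val hb, ?_⟩
  rw [← measurePreserving_digitSeq.map_eq, Measure.map_map (measurable_baseVal_val hb)
    measurable_digitSeq]
  exact (Measure.map_congr ((ae_restrict_mem measurableSet_Ico).mono fun x hx ↦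
    baseVal_canonDigit hb hx)).trans Measure.map_id

theorem splitMap_measurePreserving_general (b k : ℕ) (hb : 2 ≤ b)
    (ψ : ℕ × Fin k ≃ ℕ) :
    Measurable (splitMap b k ψ) ∧
    Measure.map (splitMap b k ψ) (volume.restrict (Set.Ico (0 : ℝ) 1))
      = Measure.pi (fun _ : Fin k => volume.restrict (Set.Ico (0 : ℝ) 1)) := by
  have : NeZero b := ⟨by omega⟩
  have hreindex : MeasurePreserving (fun a (j : Fin k) m ↦ a (ψ (m, j)))
      (Measure.infinitePi fun _ ↦ uniformOn (univ : Set (Fin b)))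
      (Measure.pi fun _ ↦ Measure.infinitePi fun _ ↦ uniformOn univ) := by
    refine ⟨by fun_prop, ?_⟩
    rw [← Measure.infinitePi_eq_pi]
    exact Measure.infinitePi_map_comp_curry _ ((Equiv.prodComm _ _).trans ψ)
  have h := ((measurePreserving_pi _ _ fun _ ↦ measurePreserving_baseVal_val hb).comp
    hreindex).comp measurePreserving_digitSeq
  exact ⟨h.measurable, h.map_eq⟩

/-- Let `b ≥ 2` and `k ≥ 1` be integers and `ψ : ℕ × {0,…,k−1} → ℕ` a
bijection. Then `E_ψ` is measurable and the pushforward of `λ` restricted to `[0,1)` under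
`E_ψ` equals the product of `k` copies of `λ` restricted to `[0,1)`. -/
theorem splitMap_measurePreserving (b k : ℕ) (hb : 2 ≤ b) (hk : 1 ≤ k)
    (ψ : ℕ × Fin k ≃ ℕ) :
    Measurable (splitMap b k ψ) ∧
    Measure.map (splitMap b k ψ) (volume.restrict (Set.Ico (0 : ℝ) 1))
      = Measure.pi (fun _ : Fin k => volume.restrict (Set.Ico (0 : ℝ) 1)) :=
  splitMap_measurePreserving_general b k hb ψ
end
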